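/- arXiv:math/0403150 — 2 statements merged into one kernel-verified Lean document; each statement's English description precedes it below -/
import Mathlib

section
/- For every integer M ≥ 2, every ε ∈ (0,1) and every δ > 0, there exists an integer D such that for all integers d ≥ D and all nonnegative integers c with c ≤ (1 − ε)·d^M / M!, one has c_{<d>} ≤ (1 − ε^{(M−1)/M} + δ)·d^{M−1} / (M−1)!. -/
/-!
Write `M = k + 2` and `t = ε ^ (1 / M)`. In a `d`-decomposition `c = ∑ C(c_i, i)` the gaps
`c_i - i` increase with `i`, and the top one is at most `k + 1` because `C(d + k + 2, d)` already
exceeds `c`; so the indices with maximal gap `k + 1` form a final block `[u, d]`. By the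
hockey-stick identity this block contributes `C(d + k + 2, k + 2) - C(u + k + 1, k + 2)` to `c`,
which together with `c ≤ (1 - t ^ M) d ^ M / M!` forces `u + k + 1 ≥ t d`. Lowering turns the
block into `C(d + k + 1, k + 1) - C(u + k, k + 1)`, which is at most
`((d + k + 1) ^ (k + 1) - u ^ (k + 1)) / (k + 1)!`, while the indices below `u` contribute at
most `C(d + k, k) = O(d ^ k)`. Dividing by `d ^ (k + 1)` leaves `1 - t ^ (k + 1) + o(1)`.
-/

open Filter Finset
open scoped Classical

/-- `IsDDecomp d c r f` says that `f r < f (r+1) < ⋯ < f d` (with `f r ≥ r`, `1 ≤ r ≤ d`)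
is a `d`-decomposition of `c`, i.e. `c = ∑_{i=r}^{d} C(f i, i)`. -/
def IsDDecomp (d c r : ℕ) (f : ℕ → ℕ) : Prop :=
  1 ≤ r ∧ r ≤ d ∧ r ≤ f r ∧ (∀ i, r ≤ i → i < d → f i < f (i + 1)) ∧
    c = ∑ i ∈ Finset.Icc r d, Nat.choose (f i) i

/-- The lowering operation `c ↦ c_{<d>}`: given the `d`-decomposition
`c = ∑_{i=r}^{d} C(c_i, i)`, set `c_{<d>} = ∑_{i=r}^{d} C(c_i - 1, i)`;
by convention it is `0` when no `d`-decomposition exists (e.g. for `c = 0`). -/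
noncomputable def lowerD (d c : ℕ) : ℕ :=
  if h : ∃ p : ℕ × (ℕ → ℕ), IsDDecomp d c p.1 p.2 then
    ∑ i ∈ Finset.Icc h.choose.1 d, Nat.choose (h.choose.2 i - 1) i
  else 0

open scoped Nat

theorem Nat.sum_Ico_add_choose_add_choose (k : ℕ) {u v : ℕ} (huv : u ≤ v) :
    ∑ i ∈ Ico u v, (i + k).choose k + (u + k).choose (k + 1) = (v + k).choose (k + 1) := by
  induction v, huv using Nat.le_induction with
  | base => simp
  | succ v _ ih =>
    rw [sum_Ico_succ_top (by omega), add_right_comm, ih, add_right_comm v 1 k,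
      Nat.choose_succ_succ', add_comm]

theorem Nat.sum_Icc_add_sub_one_choose_add_one (m n : ℕ) :
    ∑ i ∈ Icc 1 n, (i + m - 1).choose i + 1 = (n + m).choose n := by
  induction n with
  | zero => simp
  | succ n ih =>
    rw [sum_Icc_succ_top (by omega), add_right_comm, ih, add_right_comm n 1 m,
      Nat.choose_succ_succ', Nat.add_sub_cancel]

namespace IsDDecomp

variable {d c r : ℕ} {f : ℕ → ℕ}

theorem choose_le (h : IsDDecomp d c r f) {i : ℕ} (hri : r ≤ i) (hid : i ≤ d) :
    (f i).choose i ≤ c := by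
  obtain ⟨-, -, -, -, hsum⟩ := h
  rw [hsum]
  exact single_le_sum (f := fun i => (f i).choose i) (fun _ _ => Nat.zero_le _)
    (mem_Icc.2 ⟨hri, hid⟩)

theorem lt_add_of_lt_choose {K : ℕ} (h : IsDDecomp d c r f) (hc : c < (d + K).choose K) :
    f d < d + K := by
  by_contra! hK
  have := (Nat.choose_le_choose d hK).trans (h.choose_le h.2.1 le_rfl)
  rw [Nat.choose_symm_add] at this
  omega

theorem le_add_of_le_add {K : ℕ} (h : IsDDecomp d c r f) (hK : f d ≤ d + K) :
    ∀ i, r ≤ i → i ≤ d → f i ≤ i + K := by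
  obtain ⟨-, -, -, hmono, -⟩ := h
  suffices ∀ n i, i + n = d → r ≤ i → f i ≤ i + K from
    fun i hri hid => this (d - i) i (by omega) hri
  intro n
  induction n with
  | zero => rintro i rfl -; exact hK
  | succ n ih =>
    intro i hi hri
    have := hmono i hri (by omega)
    have := ih (i + 1) (by omega) (by omega)
    omega

theorem exists_final_segment_eq_add {K : ℕ} (h : IsDDecomp d c r f)
    (hK : ∀ i, r ≤ i → i ≤ d → f i ≤ i + K) :
    ∃ u, r ≤ u ∧ u ≤ d + 1 ∧ (∀ i, u ≤ i → i ≤ d → f i = i + K) ∧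
      ∀ i, r ≤ i → i < u → f i < i + K := by
  obtain ⟨-, hrd, -, hmono, -⟩ := h
  have hex : ∃ n, r ≤ n ∧ (n = d + 1 ∨ f n = n + K) := ⟨d + 1, by omega, Or.inl rfl⟩
  obtain ⟨hru, hu⟩ := Nat.find_spec hex
  have hud : Nat.find hex ≤ d + 1 := Nat.find_min' hex ⟨by omega, Or.inl rfl⟩
  refine ⟨Nat.find hex, hru, hud, fun i hui hid => ?_, fun i hri hiu => ?_⟩
  · induction i, hui using Nat.le_induction with
    | base => exact hu.resolve_left (by omega)
    | succ i hui ih =>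
      have := hmono i (hru.trans hui) (by omega)
      have := hK (i + 1) (by omega) hid
      have := ih (by omega)
      omega
  · have := Nat.find_min hex hiu
    have := hK i hri (by omega)
    grind

theorem exists_choose_bounds {k : ℕ} (h : IsDDecomp d c r f) (htop : f d ≤ d + (k + 1)) :
    ∃ u, (d + (k + 2)).choose (k + 2) ≤ c + (u + (k + 1)).choose (k + 2) ∧
      ∑ i ∈ Icc r d, (f i - 1).choose i + (u + k).choose (k + 1) ≤
        (d + (k + 1)).choose (k + 1) + (d + k).choose k := by
  obtain ⟨u, hru, hud, hup, hlow⟩ := h.exists_final_segment_eq_add (h.le_add_of_le_add htop)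
  have hsplit (g : ℕ → ℕ) :
      ∑ i ∈ Icc r d, g i = ∑ i ∈ Ico r u, g i + ∑ i ∈ Ico u (d + 1), g i := by
    rw [← Ico_add_one_right_eq_Icc, sum_Ico_consecutive _ hru hud]
  have hchoose_top : ∀ i ∈ Ico u (d + 1), (f i).choose i = (i + (k + 1)).choose (k + 1) := by
    intro i hi
    rw [hup i (mem_Ico.1 hi).1 (by grind), Nat.choose_symm_add]
  have hchoose_top_sub_one : ∀ i ∈ Ico u (d + 1), (f i - 1).choose i = (i + k).choose k := by
    intro i hi
    rw [hup i (mem_Ico.1 hi).1 (by grind), ← Nat.choose_symm_add]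
    congr 1
  refine ⟨u, ?_, ?_⟩
  · have hc := h.2.2.2.2
    have hstick := Nat.sum_Ico_add_choose_add_choose (k + 1) hud
    rw [hsplit, sum_congr rfl hchoose_top] at hc
    rw [show k + 1 + 1 = k + 2 from rfl] at hstick
    rw [show d + (k + 2) = d + 1 + (k + 1) by omega]
    omega
  · have hlow_sum :
        ∑ i ∈ Ico r u, (f i - 1).choose i ≤ ∑ i ∈ Icc 1 d, (i + k - 1).choose i :=
      calc ∑ i ∈ Ico r u, (f i - 1).choose i ≤ ∑ i ∈ Ico r u, (i + k - 1).choose i :=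
            sum_le_sum fun i hi => Nat.choose_le_choose i (by grind)
        _ ≤ ∑ i ∈ Icc 1 d, (i + k - 1).choose i :=
            sum_le_sum_of_subset fun i hi => by grind [h.1]
    have hstick := Nat.sum_Ico_add_choose_add_choose k hud
    have htail := Nat.sum_Icc_add_sub_one_choose_add_one k d
    rw [Nat.choose_symm_add] at htail
    rw [hsplit, sum_congr rfl hchoose_top_sub_one, add_assoc d 1 k, add_comm 1 k] at *
    omega

end IsDDecomp

theorem lowerD_le_of_forall_isDDecomp {d c : ℕ} {B : ℝ} (hB : 0 ≤ B)
    (h : ∀ r f, IsDDecomp d c r f →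
      ((∑ i ∈ Icc r d, (f i - 1).choose i : ℕ) : ℝ) ≤ B) :
    (lowerD d c : ℝ) ≤ B := by
  unfold lowerD
  split_ifs with hex
  · exact h _ _ hex.choose_spec
  · simpa using hB

theorem cast_add_mul_div_factorial_le_choose {c d n : ℕ} {s : ℝ}
    (hc : (c : ℝ) ≤ (1 - s) * d ^ n / n !) : c + s * d ^ n / n ! ≤ (d + n).choose n := by
  have hchoose := Nat.pow_le_choose (α := ℝ) n (d + n)
  rw [Nat.add_right_comm, Nat.add_sub_cancel] at hchoose
  calc (c : ℝ) + s * d ^ n / n ! ≤ (d : ℝ) ^ n / n ! := by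
        linarith [show (1 - s) * d ^ n / n ! + s * d ^ n / n ! = (d : ℝ) ^ n / (n ! : ℝ) by
          ring]
    _ ≤ ((d + 1 : ℕ) : ℝ) ^ n / n ! := by gcongr; linarith
    _ ≤ _ := hchoose

theorem IsDDecomp.factorial_mul_sum_le {d c r k : ℕ} {f : ℕ → ℕ} {t : ℝ}
    (h : IsDDecomp d c r f) (hc : (c : ℝ) ≤ (1 - t ^ (k + 2)) * d ^ (k + 2) / (k + 2)!)
    (hd : k + 1 ≤ t * d) :
    (k + 1)! * ((∑ i ∈ Icc r d, (f i - 1).choose i : ℕ) : ℝ) ≤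
      (d + (k + 1)) ^ (k + 1) - (t * d - (k + 1)) ^ (k + 1) + (k + 1)! * (d + (k + 1)) ^ k := by
  have htd : 0 < t * d := by linarith
  have hbig : (c : ℝ) + (t * d) ^ (k + 2) / (k + 2)! ≤ (d + (k + 2)).choose (k + 2) := by
    simpa only [mul_pow] using cast_add_mul_div_factorial_le_choose hc
  have htop : f d ≤ d + (k + 1) := Nat.le_of_lt_succ <| h.lt_add_of_lt_choose <| by
    have : (0 : ℝ) < (t * d) ^ (k + 2) / (k + 2)! := by positivity
    exact_mod_cast (lt_add_of_pos_right _ this).trans_le hbig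
  obtain ⟨u, hcu, hS⟩ := h.exists_choose_bounds htop
  have hu : t * d - (k + 1) ≤ u := by
    have hchoose := Nat.choose_le_pow_div (α := ℝ) (k + 2) (u + (k + 1))
    have hcu' : (((d + (k + 2)).choose (k + 2) : ℕ) : ℝ) ≤
        c + ((u + (k + 1)).choose (k + 2) : ℕ) := by
      exact_mod_cast hcu
    have : (t * d) ^ (k + 2) ≤ (u + (k + 1)) ^ (k + 2) := by
      refine (div_le_div_iff_of_pos_right (by positivity : (0 : ℝ) < (k + 2)!)).1 ?_
      push_cast at hchoose hcu'
      linarith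
    have := (pow_le_pow_iff_left₀ htd.le (by positivity) (by norm_num : k + 2 ≠ 0)).1 this
    linarith
  have hS' :
      ((∑ i ∈ Icc r d, (f i - 1).choose i : ℕ) : ℝ) + ((u + k).choose (k + 1) : ℕ) ≤
        ((d + (k + 1)).choose (k + 1) : ℕ) + ((d + k).choose k : ℕ) := by
    exact_mod_cast hS
  have hd_choose :
      (k + 1)! * (((d + (k + 1)).choose (k + 1) : ℕ) : ℝ) ≤ (d + (k + 1)) ^ (k + 1) := by
    have := Nat.choose_le_pow_div (α := ℝ) (k + 1) (d + (k + 1))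
    rw [le_div_iff₀' (by positivity)] at this
    exact_mod_cast this
  have hu_choose : (u : ℝ) ^ (k + 1) ≤ (k + 1)! * (((u + k).choose (k + 1) : ℕ) : ℝ) := by
    have := Nat.pow_le_choose (α := ℝ) (k + 1) (u + k)
    rwa [show u + k + 1 - (k + 1) = u by omega, div_le_iff₀' (by positivity)] at this
  have hdk_choose : (((d + k).choose k : ℕ) : ℝ) ≤ (d + (k + 1)) ^ k := by
    calc (((d + k).choose k : ℕ) : ℝ) ≤ ((d + 1) ^ k : ℕ) := by
          exact_mod_cast Nat.choose_add_le_add_one_pow d k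
      _ ≤ _ := by push_cast; gcongr; linarith
  have hu_pow : (t * d - (k + 1)) ^ (k + 1) ≤ (u : ℝ) ^ (k + 1) :=
    pow_le_pow_left₀ (by linarith) hu _
  have hF : (0 : ℝ) ≤ (k + 1)! := by positivity
  linarith [mul_le_mul_of_nonneg_left hS' hF, mul_le_mul_of_nonneg_left hdk_choose hF]

open Topology in
theorem eventually_add_pow_sub_pow_le (k : ℕ) (a C t : ℝ) {δ : ℝ} (hδ : 0 < δ) :
    ∀ᶠ x : ℝ in atTop, (x + a) ^ (k + 1) - (t * x - a) ^ (k + 1) + C * (x + a) ^ k ≤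
      (1 - t ^ (k + 1) + δ) * x ^ (k + 1) := by
  set G : ℝ → ℝ :=
    fun y => (1 + a * y) ^ (k + 1) - (t - a * y) ^ (k + 1) + C * y * (1 + a * y) ^ k
  have hG : Tendsto G (𝓝 0) (𝓝 (1 - t ^ (k + 1))) := by
    simpa [G] using (show Continuous G by fun_prop).tendsto 0
  filter_upwards [tendsto_inv_atTop_zero.eventually
    (hG.eventually (ge_mem_nhds (lt_add_of_pos_right _ hδ))), eventually_gt_atTop 0] with x hx hx0
  have hG_inv :
      (x + a) ^ (k + 1) - (t * x - a) ^ (k + 1) + C * (x + a) ^ k = G x⁻¹ * x ^ (k + 1) := by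
    have hxx : x * x⁻¹ = 1 := mul_inv_cancel₀ hx0.ne'
    rw [show x + a = (1 + a * x⁻¹) * x by linear_combination (-a) * hxx,
      show t * x - a = (t - a * x⁻¹) * x by linear_combination a * hxx]
    simp only [G, mul_pow]
    linear_combination (-C * (1 + a * x⁻¹) ^ k * x ^ k) * hxx
  rw [hG_inv]
  exact mul_le_mul_of_nonneg_right hx (by positivity)

theorem stmt1 (M : ℕ) (hM : 2 ≤ M) (ε : ℝ) (hε : ε ∈ Set.Ioo (0:ℝ) 1) (δ : ℝ) (hδ : 0 < δ) :
    ∃ D : ℕ, ∀ d : ℕ, D ≤ d → ∀ c : ℕ,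
      (c : ℝ) ≤ (1 - ε) * (d : ℝ) ^ M / (Nat.factorial M : ℝ) →
      (lowerD d c : ℝ) ≤
        (1 - ε ^ (((M : ℝ) - 1) / (M : ℝ)) + δ) * (d : ℝ) ^ (M - 1) / (Nat.factorial (M - 1) : ℝ) := by
  obtain ⟨k, rfl⟩ : ∃ k, M = k + 2 := ⟨M - 2, by omega⟩
  obtain ⟨hε0, hε1⟩ := hε
  set t := ε ^ ((↑(k + 2) : ℝ)⁻¹)
  have ht0 : 0 < t := by positivity
  have ht1 : t ^ (k + 1) ≤ 1 :=
    pow_le_one₀ ht0.le (Real.rpow_le_one hε0.le hε1.le (by positivity))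
  have hε_eq : ε = t ^ (k + 2) := (Real.rpow_inv_natCast_pow hε0.le (by omega)).symm
  have hexp : ε ^ (((↑(k + 2) : ℝ) - 1) / ↑(k + 2)) = t ^ (k + 1) := by
    rw [← Real.rpow_natCast, ← Real.rpow_mul hε0.le]
    congr 1
    push_cast
    field_simp
    ring
  rw [hexp, show k + 2 - 1 = k + 1 from rfl]
  obtain ⟨D, hD⟩ := eventually_atTop.1 <| tendsto_natCast_atTop_atTop.eventually <|
    (eventually_add_pow_sub_pow_le k (k + 1) (k + 1)! t hδ).and
      ((tendsto_id.const_mul_atTop ht0).eventually_ge_atTop (k + 1 : ℝ))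
  refine ⟨D, fun d hd c hc => lowerD_le_of_forall_isDDecomp ?_ fun r f h => ?_⟩
  · have : 0 ≤ 1 - t ^ (k + 1) + δ := by linarith
    positivity
  rw [hε_eq] at hc
  rw [le_div_iff₀ (by positivity), mul_comm]
  exact (h.factorial_mul_sum_le hc (hD d hd).2).trans (hD d hd).1
end

section
/- The d-decomposition of a positive integer is unique: if c is a positive integer, d is a positive integer, and (r, c_d > c_{d−1} > ⋯ > c_r ≥ r) and (r', c'_d > c'_{d−1} > ⋯ > c'_{r'} ≥ r') are two sequences with 1 ≤ r ≤ d, 1 ≤ r' ≤ d, c = Σ_{i=r}^{d} C(c_i, i) and c = Σ_{i=r'}^{d} C(c'_i, i), then r = r' and c_i = c'_i for all i with r ≤ i ≤ d. -/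
open Filter Finset
open scoped Classical

/-!
The top part is forced: a `d`-decomposition with top part `c_d` satisfies
`C(c_d, d) ≤ c < C(c_d + 1, d)`, since the lower terms are at most
`∑_{1 ≤ i < d} C(c_d - d + i, i) < C(c_d, d - 1)` (Pascal's rule, telescoped).
Removing the top terms leaves two `(d-1)`-decompositions of `c - C(c_d, d)` to which induction
applies, unless one of them is empty; then so is the other, as a nonempty one has positive value.
-/

lemma add_sub_le_of_lt_succ {r d : ℕ} {f : ℕ → ℕ} (hf : ∀ i, r ≤ i → i < d → f i < f (i + 1))
    {i j : ℕ} (hri : r ≤ i) (hij : i ≤ j) (hjd : j ≤ d) : f i + (j - i) ≤ f j := by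
  induction j, hij using Nat.le_induction with
  | base => simp
  | succ j hij ih =>
    have := hf j (hri.trans hij) hjd
    have := ih (by omega)
    omega

lemma sum_Icc_choose_add_lt (n d : ℕ) :
    ∑ i ∈ Icc 1 d, (n + i).choose i < (n + d + 1).choose d := by
  induction d with
  | zero => simp
  | succ d ih =>
    rw [sum_Icc_succ_top (by omega), show n + (d + 1) = n + d + 1 by omega]
    have := Nat.choose_succ_succ' (n + d + 1) d
    omega

lemma le_of_choose_le_of_lt_choose_succ {a b d c : ℕ} (ha : a.choose d ≤ c)
    (hb : c < (b + 1).choose d) : a ≤ b := by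
  by_contra! hba
  exact (ha.trans_lt hb).not_ge (Nat.choose_le_choose d hba)

namespace IsDDecomp

variable {n d c r : ℕ} {f : ℕ → ℕ}

lemma pos (h : IsDDecomp d c r f) : 0 < c := by
  obtain ⟨_, hrd, hfr, _, rfl⟩ := h
  exact (Nat.choose_pos hfr).trans_le <|
    single_le_sum (f := fun i => (f i).choose i) (fun _ _ => Nat.zero_le _) (by simp [hrd])

lemma choose_top_le (h : IsDDecomp d c r f) : (f d).choose d ≤ c := by
  obtain ⟨_, hrd, _, _, rfl⟩ := h
  exact single_le_sum (f := fun i => (f i).choose i) (fun _ _ => Nat.zero_le _) (by simp [hrd])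

lemma lt_choose_succ_top (h : IsDDecomp d c r f) : c < (f d + 1).choose d := by
  obtain ⟨hr1, hrd, hfr, hf, rfl⟩ := h
  have hgap : ∀ i ∈ Icc r d, f i + (d - i) ≤ f d := fun i hi =>
    add_sub_le_of_lt_succ hf (mem_Icc.1 hi).1 (mem_Icc.1 hi).2 le_rfl
  obtain ⟨m, hm⟩ : ∃ m, f d = m + d := ⟨f d - d, by have := hgap r (by simp [hrd]); omega⟩
  calc ∑ i ∈ Icc r d, (f i).choose i
      ≤ ∑ i ∈ Icc r d, (m + i).choose i := sum_le_sum fun i hi =>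
        Nat.choose_le_choose i (by have := hgap i hi; have := (mem_Icc.1 hi).2; omega)
    _ ≤ ∑ i ∈ Icc 1 d, (m + i).choose i := sum_le_sum_of_subset (Icc_subset_Icc_left hr1)
    _ < (f d + 1).choose d := by rw [hm]; exact sum_Icc_choose_add_lt m d

lemma top_eq {r' : ℕ} {f' : ℕ → ℕ} (h : IsDDecomp d c r f) (h' : IsDDecomp d c r' f') :
    f d = f' d :=
  le_antisymm (le_of_choose_le_of_lt_choose_succ h.choose_top_le h'.lt_choose_succ_top)
    (le_of_choose_le_of_lt_choose_succ h'.choose_top_le h.lt_choose_succ_top)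

lemma eq_sum_add_choose_top (h : IsDDecomp (n + 1) c r f) :
    c = ∑ i ∈ Icc r n, (f i).choose i + (f (n + 1)).choose (n + 1) := by
  rw [h.2.2.2.2, sum_Icc_succ_top h.2.1]

lemma of_succ (h : IsDDecomp (n + 1) c r f) (hr : r ≤ n) :
    IsDDecomp n (∑ i ∈ Icc r n, (f i).choose i) r f :=
  ⟨h.1, hr, h.2.2.1, fun i hri hin => h.2.2.2.1 i hri (by omega), rfl⟩

lemma sum_pos_iff (h : IsDDecomp (n + 1) c r f) :
    0 < ∑ i ∈ Icc r n, (f i).choose i ↔ r ≤ n := by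
  refine ⟨fun hpos => ?_, fun hr => (h.of_succ hr).pos⟩
  by_contra hrn
  rw [Icc_eq_empty hrn, sum_empty] at hpos
  exact hpos.false

theorem unique {r' : ℕ} {f' : ℕ → ℕ} (h : IsDDecomp d c r f) (h' : IsDDecomp d c r' f') :
    r = r' ∧ ∀ i, r ≤ i → i ≤ d → f i = f' i := by
  induction d generalizing c r r' with
  | zero => exact absurd (h.1.trans h.2.1) (by omega)
  | succ n ih =>
    have htop := h.top_eq h'
    have hrest : ∑ i ∈ Icc r n, (f i).choose i = ∑ i ∈ Icc r' n, (f' i).choose i := by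
      have := h.eq_sum_add_choose_top
      have := h'.eq_sum_add_choose_top
      rw [htop] at *
      omega
    by_cases hr : r ≤ n
    · have hr' : r' ≤ n := h'.sum_pos_iff.1 (hrest ▸ h.sum_pos_iff.2 hr)
      obtain ⟨rfl, hf⟩ := ih (h.of_succ hr) (hrest ▸ h'.of_succ hr')
      refine ⟨rfl, fun i hri hin => ?_⟩
      rcases Nat.lt_or_ge i (n + 1) with hi | hi
      · exact hf i hri (by omega)
      · rwa [show i = n + 1 by omega]
    · have hr' : ¬r' ≤ n := fun hr' => hr (h.sum_pos_iff.1 (hrest ▸ h'.sum_pos_iff.2 hr'))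
      refine ⟨by have := h.2.1; have := h'.2.1; omega, fun i hri hin => ?_⟩
      rwa [show i = n + 1 by omega]

end IsDDecomp

theorem stmt3_general (c d r r' : ℕ) (f f' : ℕ → ℕ)
    (h : IsDDecomp d c r f) (h' : IsDDecomp d c r' f') :
    r = r' ∧ ∀ i, r ≤ i → i ≤ d → f i = f' i :=
  h.unique h'

theorem stmt3 (c d r r' : ℕ) (f f' : ℕ → ℕ) (hc : 0 < c) (hd : 0 < d)
    (h : IsDDecomp d c r f) (h' : IsDDecomp d c r' f') :
    r = r' ∧ ∀ i, r ≤ i → i ≤ d → f i = f' i :=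
  stmt3_general c d r r' f f' h h'
end
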